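/- arXiv:2106.07746 — 2 statements merged into one kernel-verified Lean document; each statement's English description precedes it below -/
import Mathlib

section
/- Let σ, ς ∈ ℂ∖{0} with σ/ς ∉ ℝ, and let z ∈ ℂ with z ≠ mσ + nς for all (m, n) ∈ ℤ². Then the family (m, n) ↦ (z − mσ − nς)^{−2} − (mσ + nς)^{−2}, indexed by (m, n) ∈ ℤ² ∖ {(0,0)}, is summable; in particular the Weierstrass elliptic function ℘(z, σ, ς) = z^{−2} + Σ_{(m,n)∈ℤ²∖{(0,0)}} [(z − mσ − nς)^{−2} − (mσ + nς)^{−2}] is well defined for z outside the lattice ℤσ + ℤς. -/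
open Complex

noncomputable section

/-- The complex number `2πi`. -/
def twoPiI : ℂ := 2 * (Real.pi : ℂ) * Complex.I

/-- The lattice point `2πi·mτ + 2πi·n` attached to `p = (m, n) ∈ ℤ²`. -/
def latPt (τ : ℂ) (p : ℤ × ℤ) : ℂ := twoPiI * p.1 * τ + twoPiI * p.2

/-- The lattice `L_τ = 2πiτℤ + 2πiℤ ⊆ ℂ`. -/
def latticeOf (τ : ℂ) : Set ℂ := {ω : ℂ | ∃ p : ℤ × ℤ, ω = latPt τ p}

/-- `r_τ = min { |ω| : ω ∈ L_τ, ω ≠ 0 }`. -/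
def rLat (τ : ℂ) : ℝ := sInf {r : ℝ | ∃ p : ℤ × ℤ, p ≠ 0 ∧ r = ‖latPt τ p‖}

/-- The Eisenstein series `E_k(τ)`, defined by the `q`-expansion for even `k`
and equal to `0` for odd `k`. -/
def Ek (k : ℕ) (τ : ℂ) : ℂ :=
  if Even k then
    -((bernoulli k : ℚ) : ℂ) / (Nat.factorial k : ℂ) +
      (2 / (Nat.factorial (k - 1) : ℂ)) *
        ∑' n : ℕ, ((ArithmeticFunction.sigma (k - 1) (n + 1) : ℕ) : ℂ) *
          Complex.exp (twoPiI * τ) ^ (n + 1)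
  else 0

/-- The Weierstrass elliptic function `℘(z, σ, ς)` with periods `σ`, `ς`. -/
def wp (z σ ς : ℂ) : ℂ :=
  (z ^ 2)⁻¹ + ∑' p : {p : ℤ × ℤ // p ≠ 0},
    (((z - (p.1.1 : ℂ) * σ - (p.1.2 : ℂ) * ς) ^ 2)⁻¹ - (((p.1.1 : ℂ) * σ + (p.1.2 : ℂ) * ς) ^ 2)⁻¹)

/-- `P₂(τ, z) = ℘(z, 2πiτ, 2πi) + E₂(τ)`. -/
def P2 (τ z : ℂ) : ℂ := wp z (twoPiI * τ) twoPiI + Ek 2 τ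

/-- The Weierstrass zeta function of the lattice `L_τ`. -/
def wzeta (τ z : ℂ) : ℂ :=
  z⁻¹ + ∑' p : {p : ℤ × ℤ // p ≠ 0},
    ((z - latPt τ p.1)⁻¹ + (latPt τ p.1)⁻¹ + z * ((latPt τ p.1) ^ 2)⁻¹)

/-- `P₁(τ, z) = ζ(τ, z) − z·E₂(τ)`. -/
def P1 (τ z : ℂ) : ℂ := wzeta τ z - z * Ek 2 τ

/-- `P_k(τ, z) = ((−1)^{k−1}/(k−1)!)·(∂/∂z)^{k−1} P₁(τ, z)`. -/
def Pk (k : ℕ) (τ z : ℂ) : ℂ :=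
  ((-1 : ℂ) ^ (k - 1) / (Nat.factorial (k - 1) : ℂ)) * iteratedDeriv (k - 1) (P1 τ) z

/-- `C(k, l, τ) = (−1)^{k+1}·((k+l−1)!/((k−1)!(l−1)!))·E_{k+l}(τ)`. -/
def Ckl (k l : ℕ) (τ : ℂ) : ℂ :=
  (-1 : ℂ) ^ (k + 1) *
    ((Nat.factorial (k + l - 1) : ℂ) / ((Nat.factorial (k - 1) : ℂ) * (Nat.factorial (l - 1) : ℂ))) *
    Ek (k + l) τ

/-- `D(k, l, τ, z) = (−1)^{k+1}·((k+l−1)!/((k−1)!(l−1)!))·P_{k+l}(τ, z)`. -/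
def Dkl (k l : ℕ) (τ z : ℂ) : ℂ :=
  (-1 : ℂ) ^ (k + 1) *
    ((Nat.factorial (k + l - 1) : ℂ) / ((Nat.factorial (k - 1) : ℂ) * (Nat.factorial (l - 1) : ℂ))) *
    Pk (k + l) τ z

end

lemma linearIndependent_pair_of_div_notMem_range_ofReal {σ ς : ℂ}
    (h : σ / ς ∉ Set.range ((↑) : ℝ → ℂ)) : LinearIndependent ℝ ![σ, ς] := by
  have hς : ς ≠ 0 := by
    rintro rfl
    exact h ⟨0, by simp⟩
  rw [LinearIndependent.pair_symm_iff, LinearIndependent.pair_iff' hς]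
  rintro a rfl
  exact h ⟨a, by rw [Complex.real_smul, mul_div_cancel_right₀ _ hς]⟩

lemma PeriodPair.summable_weierstrassP_summand_intProd (L : PeriodPair) (z : ℂ) :
    Summable fun p : ℤ × ℤ =>
      ((z - p.1 * L.ω₁ - p.2 * L.ω₂) ^ 2)⁻¹ - ((p.1 * L.ω₁ + p.2 * L.ω₂) ^ 2)⁻¹ := by
  refine (L.latticeEquivProd.symm.toEquiv.summable_iff.2 (L.hasSum_weierstrassP z).summable).congr
    fun p => ?_
  simp only [Function.comp_apply, LinearEquiv.coe_toEquiv, L.latticeEquiv_symm_apply, one_div,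
    sub_sub]

theorem stmt1_general (σ ς : ℂ)
    (hratio : σ / ς ∉ Set.range ((↑) : ℝ → ℂ))
    (z : ℂ) :
    Summable (fun p : {p : ℤ × ℤ // p ≠ 0} =>
      ((z - (p.1.1 : ℂ) * σ - (p.1.2 : ℂ) * ς) ^ 2)⁻¹ -
        (((p.1.1 : ℂ) * σ + (p.1.2 : ℂ) * ς) ^ 2)⁻¹) :=
  (PeriodPair.summable_weierstrassP_summand_intProd
    ⟨σ, ς, linearIndependent_pair_of_div_notMem_range_ofReal hratio⟩ z).subtype _

/-- summability of the defining series of the Weierstrass elliptic function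
`℘(z, σ, ς)` for `z` outside the lattice `ℤσ + ℤς`. -/
theorem stmt1 (σ ς : ℂ) (hσ : σ ≠ 0) (hς : ς ≠ 0)
    (hratio : σ / ς ∉ Set.range ((↑) : ℝ → ℂ))
    (z : ℂ) (hz : ∀ p : ℤ × ℤ, z ≠ (p.1 : ℂ) * σ + (p.2 : ℂ) * ς) :
    Summable (fun p : {p : ℤ × ℤ // p ≠ 0} =>
      ((z - (p.1.1 : ℂ) * σ - (p.1.2 : ℂ) * ς) ^ 2)⁻¹ -
        (((p.1.1 : ℂ) * σ + (p.1.2 : ℂ) * ς) ^ 2)⁻¹) :=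
  stmt1_general σ ς hratio z
end

section
/- Let τ be in the complex upper half-plane, let z ∈ ℂ with z ∉ L_τ, and let w ∈ ℂ with |w| < dist(z, L_τ). Then the series Σ_{k≥1} P_k(τ, z)·w^{k−1} converges absolutely and P₁(τ, z − w) = Σ_{k≥1} P_k(τ, z)·w^{k−1}. -/
/-!
Off the lattice, `P₁(τ, ·)` is holomorphic: each summand of `ζ` equals `u² / (ω² (u − ω))`,
which is `O(‖ω‖⁻³)` uniformly for `u` bounded and bounded away from `L_τ`, and `Σ ‖ω‖⁻³` converges
(it is the weight-3 Eisenstein sum). Hence `P₁(τ, ·)` is holomorphic on the disc of radius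
`dist(z, L_τ)` about `z`, where it equals its Taylor series; its `n`-th term at `z − w` is
`P_{n+1}(τ, z) wⁿ`. In `ℂ` summability already gives absolute convergence.
-/


open Complex

open Metric Nat

lemma latPt_eq (τ : ℂ) (p : ℤ × ℤ) : latPt τ p = twoPiI * (p.1 * τ + p.2) := by
  rw [latPt]; ring

lemma twoPiI_ne_zero : twoPiI ≠ 0 := by
  simp [twoPiI, Real.pi_ne_zero]

lemma latPt_ne_zero {τ : ℂ} (hτ : 0 < τ.im) {p : ℤ × ℤ} (hp : p ≠ 0) : latPt τ p ≠ 0 := by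
  rw [latPt_eq]
  refine mul_ne_zero twoPiI_ne_zero fun h => hp ?_
  have hp1 : p.1 = 0 := by
    have him := congrArg Complex.im h
    simp only [add_im, mul_im, intCast_re, intCast_im, zero_mul, add_zero, zero_im] at him
    exact_mod_cast (mul_eq_zero.mp him).resolve_right hτ.ne'
  have hp2 : p.2 = 0 := by simpa [hp1] using h
  exact Prod.ext hp1 hp2

lemma summable_inv_norm_latPt_pow_three {τ : ℂ} (hτ : 0 < τ.im) :
    Summable fun p : ℤ × ℤ => (‖latPt τ p‖ ^ 3)⁻¹ := by
  have h := EisensteinSeries.summable_norm_eisSummand (k := 3) le_rfl ⟨τ, hτ⟩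
  rw [← (finTwoArrowEquiv ℤ).symm.summable_iff] at h
  refine (h.mul_right (‖twoPiI‖ ^ 3)⁻¹).congr fun p => ?_
  simp [EisensteinSeries.eisSummand, latPt_eq, mul_pow, zpow_neg]

noncomputable def zetaSummand (u ω : ℂ) : ℂ := (u - ω)⁻¹ + ω⁻¹ + u * (ω ^ 2)⁻¹

lemma zetaSummand_eq {u ω : ℂ} (hω : ω ≠ 0) (huω : u - ω ≠ 0) :
    zetaSummand u ω = u ^ 2 / (ω ^ 2 * (u - ω)) := by
  rw [zetaSummand]
  field_simp
  ring

lemma norm_zetaSummand_le {u ω : ℂ} {M δ : ℝ} (hδ : 0 < δ) (hu : ‖u‖ ≤ M) (hω : ω ≠ 0)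
    (hd : δ ≤ ‖u - ω‖) : ‖zetaSummand u ω‖ ≤ M ^ 2 * (M / δ + 1) * (‖ω‖ ^ 3)⁻¹ := by
  have hd0 : 0 < ‖u - ω‖ := hδ.trans_le hd
  have hω0 : 0 < ‖ω‖ := norm_pos_iff.mpr hω
  have hM : 0 ≤ M := (norm_nonneg u).trans hu
  have hωle : ‖ω‖ ≤ (M / δ + 1) * ‖u - ω‖ := by
    have h1 : M ≤ M / δ * ‖u - ω‖ := by
      rw [div_mul_eq_mul_div, le_div_iff₀ hδ]; exact mul_le_mul_of_nonneg_left hd hM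
    have h2 : ‖ω‖ ≤ ‖u‖ + ‖u - ω‖ := by
      simpa using norm_sub_le u (u - ω)
    linarith
  rw [zetaSummand_eq hω (norm_pos_iff.mp hd0), norm_div, norm_mul, norm_pow, norm_pow,
    div_le_iff₀ (by positivity)]
  calc ‖u‖ ^ 2 ≤ M ^ 2 := by gcongr
    _ ≤ M ^ 2 * ((M / δ + 1) * ‖u - ω‖ / ‖ω‖) :=
      le_mul_of_one_le_right (by positivity) ((one_le_div hω0).mpr hωle)
    _ = M ^ 2 * (M / δ + 1) * (‖ω‖ ^ 3)⁻¹ * (‖ω‖ ^ 2 * ‖u - ω‖) := by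
      field_simp

lemma wzeta_eq (τ : ℂ) :
    wzeta τ = fun u => u⁻¹ + ∑' p : {p : ℤ × ℤ // p ≠ 0}, zetaSummand u (latPt τ p.1) := rfl

lemma differentiableOn_wzeta {τ : ℂ} (hτ : 0 < τ.im) {U : Set ℂ} (hU : IsOpen U) {M δ : ℝ}
    (hδ : 0 < δ) (hM : ∀ u ∈ U, ‖u‖ ≤ M) (hdist : ∀ u ∈ U, ∀ ω ∈ latticeOf τ, δ ≤ ‖u - ω‖) :
    DifferentiableOn ℂ (wzeta τ) U := by
  have hne : ∀ u ∈ U, ∀ ω ∈ latticeOf τ, u - ω ≠ 0 := fun u hu ω hω =>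
    norm_pos_iff.mp (hδ.trans_le (hdist u hu ω hω))
  have hsum : DifferentiableOn ℂ
      (fun u => ∑' p : {p : ℤ × ℤ // p ≠ 0}, zetaSummand u (latPt τ p.1)) U :=
    differentiableOn_tsum_of_summable_norm
      (((summable_inv_norm_latPt_pow_three hτ).subtype _).mul_left (M ^ 2 * (M / δ + 1)))
      (fun p => (((differentiableOn_id.sub_const _).inv fun u hu =>
        hne u hu _ ⟨p.1, rfl⟩).add_const _).add (differentiableOn_id.mul_const _))
      hU
      (fun p u hu => norm_zetaSummand_le hδ (hM u hu) (latPt_ne_zero hτ p.2)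
        (hdist u hu _ ⟨p.1, rfl⟩))
  have hinv : DifferentiableOn ℂ (fun u : ℂ => u⁻¹) U :=
    differentiableOn_id.inv fun u hu => by
      simpa using hne u hu 0 ⟨0, by simp [latPt]⟩
  rw [wzeta_eq]
  exact hinv.add hsum

lemma differentiableAt_wzeta {τ : ℂ} (hτ : 0 < τ.im) {u : ℂ}
    (hu : 0 < infDist u (latticeOf τ)) : DifferentiableAt ℂ (wzeta τ) u := by
  set ρ := infDist u (latticeOf τ)
  refine (differentiableOn_wzeta hτ isOpen_ball (M := ‖u‖ + ρ) (δ := ρ / 2) (half_pos hu)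
    (fun v hv => ?_) (fun v hv ω hω => ?_)).differentiableAt (ball_mem_nhds u (half_pos hu))
  · have htri := norm_le_norm_add_norm_sub' v u
    rw [mem_ball, dist_eq_norm] at hv
    linarith
  · have h1 : ρ ≤ dist u v + dist v ω :=
      (infDist_le_dist_of_mem hω).trans (dist_triangle u v ω)
    rw [mem_ball'] at hv
    rw [dist_eq_norm v ω] at h1
    linarith

lemma differentiableAt_P1 {τ : ℂ} (hτ : 0 < τ.im) {u : ℂ}
    (hu : 0 < infDist u (latticeOf τ)) : DifferentiableAt ℂ (P1 τ) u :=
  (differentiableAt_wzeta hτ hu).sub (differentiableAt_id.mul_const _)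

lemma differentiableOn_P1_ball {τ : ℂ} (hτ : 0 < τ.im) (z : ℂ) :
    DifferentiableOn ℂ (P1 τ) (ball z (infDist z (latticeOf τ))) := fun u hu =>
  (differentiableAt_P1 hτ <| by
    have htri := infDist_le_infDist_add_dist (s := latticeOf τ) (x := z) (y := u)
    rw [mem_ball'] at hu
    linarith).differentiableWithinAt

lemma inv_factorial_smul_taylor_eq_Pk (τ z w : ℂ) (n : ℕ) :
    (n ! : ℂ)⁻¹ • (z - w - z) ^ n • iteratedDeriv n (P1 τ) z = Pk (n + 1) τ z * w ^ n := by
  rw [Pk, Nat.add_sub_cancel, smul_eq_mul, smul_eq_mul, sub_sub_cancel_left, neg_pow]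
  ring

theorem stmt7_general (τ : ℂ) (hτ : 0 < τ.im) (z : ℂ) (w : ℂ)
    (hw : ‖w‖ < Metric.infDist z (latticeOf τ)) :
    Summable (fun k : ℕ => ‖Pk (k + 1) τ z * w ^ k‖) ∧
    P1 τ (z - w) = ∑' k : ℕ, Pk (k + 1) τ z * w ^ k := by
  have hzw : z - w ∈ ball z (infDist z (latticeOf τ)) := by
    rwa [mem_ball, dist_eq_norm, sub_sub_cancel_left, norm_neg]
  have H := Complex.hasSum_taylorSeries_on_ball (differentiableOn_P1_ball hτ z) hzw
  simp only [inv_factorial_smul_taylor_eq_Pk] at H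
  exact ⟨summable_norm_iff.mpr H.summable, H.tsum_eq.symm⟩

/-- for `z ∉ L_τ` and `|w| < dist(z, L_τ)`, the series
`Σ_{k≥1} P_k(τ, z)·w^{k−1}` converges absolutely and `P₁(τ, z − w) = Σ_{k≥1} P_k(τ, z)·w^{k−1}`. -/
theorem stmt7 (τ : ℂ) (hτ : 0 < τ.im) (z : ℂ) (hz : z ∉ latticeOf τ) (w : ℂ)
    (hw : ‖w‖ < Metric.infDist z (latticeOf τ)) :
    Summable (fun k : ℕ => ‖Pk (k + 1) τ z * w ^ k‖) ∧
    P1 τ (z - w) = ∑' k : ℕ, Pk (k + 1) τ z * w ^ k :=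
  stmt7_general τ hτ z w hw
end
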